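/- Let T = [[A, B], [C, D]] ∈ U(c,d) with c ≥ d. Then |det D| = exp(N_d(T)), where N_d(T) = Σ_{i=1}^d ln((σ_i(T) + σ_i(T)^{-1})/2) and σ_i(T) are the d largest singular values of T. -/

import Mathlib

open Matrix MeasureTheory Filter
open scoped ComplexOrder
noncomputable section

/-- The singular values of a complex square matrix indexed by `Fin n`,
listed in decreasing order (`sv T 0` is the largest). -/
def sv {n : ℕ} (T : Matrix (Fin n) (Fin n) ℂ) : Fin n → ℝ := fun i =>
  let ev := (Matrix.isHermitian_conjTranspose_mul_self T).eigenvalues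
  Real.sqrt (ev (Tuple.sort ev i.rev))

/-- The hermitian form matrix `G_{c,d} = diag(1_c, -1_d)`. -/
def Gcd (c d : ℕ) : Matrix (Fin c ⊕ Fin d) (Fin c ⊕ Fin d) ℂ :=
  Matrix.fromBlocks 1 0 0 (-1)

/-- The pseudo-unitary group `U(c,d) = {T : Tᴴ G_{c,d} T = G_{c,d}}`. -/
def pseudoU (c d : ℕ) : Set (Matrix (Fin c ⊕ Fin d) (Fin c ⊕ Fin d) ℂ) :=
  { T | Tᴴ * Gcd c d * T = Gcd c d }

/-- Singular values, in decreasing order, of a matrix indexed by `Fin c ⊕ Fin d`. -/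
def svS {c d : ℕ} (T : Matrix (Fin c ⊕ Fin d) (Fin c ⊕ Fin d) ℂ) : Fin (c + d) → ℝ :=
  sv (T.submatrix finSumFinEquiv.symm finSumFinEquiv.symm)

/-- `N_r(T) = Σ_{i=1}^r ln((σ_i(T) + σ_i(T)⁻¹)/2)` for decreasingly ordered singular values. -/
def NS {c d : ℕ} (r : ℕ) (T : Matrix (Fin c ⊕ Fin d) (Fin c ⊕ Fin d) ℂ) : ℝ :=
  ∑ i : Fin (c + d), if (i : ℕ) < r then Real.log ((svS T i + (svS T i)⁻¹) / 2) else 0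

/-- The unitary `U_θ^{(c,d)} = diag(e^{2πiθ} 1_c, 1_d)`. -/
def Umat (c d : ℕ) (θ : ℝ) : Matrix (Fin c ⊕ Fin d) (Fin c ⊕ Fin d) ℂ :=
  Matrix.fromBlocks (Complex.exp (((2 * Real.pi * θ : ℝ) : ℂ) * Complex.I) • 1) 0 0 1

/-- The symplectic form matrix `J = [[0, 1_d], [-1_d, 0]]`. -/
def Jmat (d : ℕ) : Matrix (Fin d ⊕ Fin d) (Fin d ⊕ Fin d) ℂ :=
  Matrix.fromBlocks 0 1 (-1) 0

/-- The hermitian-symplectic group `HSp(2d) = {T : Tᴴ J T = J}`. -/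
def HSp (d : ℕ) : Set (Matrix (Fin d ⊕ Fin d) (Fin d ⊕ Fin d) ℂ) :=
  { T | Tᴴ * Jmat d * T = Jmat d }

/-- The Cayley transform `C = (1/√2)[[1, i·1],[1, -i·1]]`. -/
def Cayley (d : ℕ) : Matrix (Fin d ⊕ Fin d) (Fin d ⊕ Fin d) ℂ :=
  ((Real.sqrt 2 : ℂ))⁻¹ • Matrix.fromBlocks 1 (Complex.I • 1) 1 ((-Complex.I) • 1)

/-- The rotation matrix `R_θ = [[cos(πθ)1, -sin(πθ)1],[sin(πθ)1, cos(πθ)1]]`. -/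
def Rrot (d : ℕ) (θ : ℝ) : Matrix (Fin d ⊕ Fin d) (Fin d ⊕ Fin d) ℂ :=
  Matrix.fromBlocks ((Real.cos (Real.pi * θ) : ℂ) • 1) (-((Real.sin (Real.pi * θ) : ℂ) • 1))
    ((Real.sin (Real.pi * θ) : ℂ) • 1) ((Real.cos (Real.pi * θ) : ℂ) • 1)

/-- The spectral radius of the `d`-th exterior power: the product of the `d` largest
absolute values of eigenvalues (roots of the characteristic polynomial, with
algebraic multiplicity). -/
def rhoLam {m : Type*} [Fintype m] [DecidableEq m] (d : ℕ) (M : Matrix m m ℂ) : ℝ :=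
  (((M.charpoly.roots.map (fun z : ℂ => ‖z‖)).sort (· ≥ ·)).take d).prod

/-- `‖Λ^r T‖`: the product of the `r` largest singular values of `T`. -/
def normLam {c d : ℕ} (r : ℕ) (T : Matrix (Fin c ⊕ Fin d) (Fin c ⊕ Fin d) ℂ) : ℝ :=
  ∏ i : Fin (c + d), if (i : ℕ) < r then svS T i else 1

/-- The Möbius action `T · M = (AM + B)(CM + D)⁻¹` of a block matrix on `c × d` matrices. -/
def mob {c d : ℕ} (T : Matrix (Fin c ⊕ Fin d) (Fin c ⊕ Fin d) ℂ)
    (M : Matrix (Fin c) (Fin d) ℂ) : Matrix (Fin c) (Fin d) ℂ :=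
  (T.toBlocks₁₁ * M + T.toBlocks₁₂) * (T.toBlocks₂₁ * M + T.toBlocks₂₂)⁻¹

/-- The cocycle `B_n(x) = B(f^{n-1}x) ⋯ B(fx) B(x)`. -/
def cocycle {X : Type*} {m : Type*} [Fintype m] [DecidableEq m]
    (f : X → X) (B : X → Matrix m m ℂ) (x : X) : ℕ → Matrix m m ℂ
  | 0 => 1
  | n + 1 => B (f^[n] x) * cocycle f B x n

/-!
Put `H = TᴴT` and `G = G_{c,d}`. From `TᴴGT = G` one gets `H⁻¹ = GHG`, so the spectrum of `H`
is closed under inversion, and `H - 1 = Tᴴ(1 - G)T - (1 - G)` has rank at most `2d`. Hence at most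
`d` singular values exceed `1` and, by the symmetry, at most `d ≤ c` lie below `1`: the `d` largest
singular values are those exceeding `1`, padded with `1`s, and the square of
`∏_{i ≤ d} (σᵢ + σᵢ⁻¹)/2` is the full product `∏ᵢ (σᵢ + σᵢ⁻¹)/2`. That full product is `|det D|²`:
`1 + H = Tᴴ(T + GTG)` with `T + GTG = diag(2A, 2D)` gives
`∏ᵢ (σᵢ + σᵢ⁻¹) = 2^(c+d) |det A| |det D|`, and `|det A| = |det D|` because `AᴴA = 1 + CᴴC`
and `DDᴴ = 1 + CCᴴ`.
-/

open Finset

@[to_additive]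
lemma prod_comp_eq_of_univ_map_eq {ι α M : Type*} [Fintype ι] [CommMonoid M] {σ τ : ι → α}
    (h : univ.val.map σ = univ.val.map τ) (g : α → M) : ∏ i, g (σ i) = ∏ i, g (τ i) := by
  change (univ.val.map (g ∘ σ)).prod = (univ.val.map (g ∘ τ)).prod
  rw [← Multiset.map_map, h, Multiset.map_map]

lemma card_filter_comp_eq_of_univ_map_eq {ι α : Type*} [Fintype ι] {σ τ : ι → α}
    (h : univ.val.map σ = univ.val.map τ) (p : α → Prop) [DecidablePred p] :
    #{i | p (σ i)} = #{i | p (τ i)} := by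
  simp only [card_filter, sum_comp_eq_of_univ_map_eq h fun x => if p x then 1 else 0]

section InversionSymmetric
variable {ι : Type*} [Fintype ι] {σ : ι → ℝ}

lemma card_filter_lt_one_eq (hinv : univ.val.map (fun i => (σ i)⁻¹) = univ.val.map σ)
    (hpos : ∀ i, 0 < σ i) : #{i | σ i < 1} = #{i | 1 < σ i} := by
  rw [← card_filter_comp_eq_of_univ_map_eq hinv]
  simp only [one_lt_inv₀ (hpos _)]

lemma prod_eq_sq_prod_filter_one_lt (hinv : univ.val.map (fun i => (σ i)⁻¹) = univ.val.map σ)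
    (hpos : ∀ i, 0 < σ i) {f : ℝ → ℝ} (hf : ∀ x, f x⁻¹ = f x) (hf1 : f 1 = 1) :
    ∏ i, f (σ i) = (∏ i with 1 < σ i, f (σ i)) ^ 2 := by
  -- `f x = F x * F x⁻¹` for `x > 0`; the inversion symmetry turns `∏ F (σ i)⁻¹` into `∏ F (σ i)`.
  set F : ℝ → ℝ := fun x => if 1 < x then f x else 1
  have hsplit : ∀ i, f (σ i) = F (σ i) * F (σ i)⁻¹ := by
    intro i
    rcases lt_trichotomy (σ i) 1 with h | h | h
    · simp [F, not_lt.2 h.le, one_lt_inv₀ (hpos i), h, hf]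
    · simp [F, h, hf1]
    · simp [F, h, (inv_lt_one₀ (hpos i)).2 h |>.not_gt]
  rw [prod_congr rfl fun i _ => hsplit i, prod_mul_distrib,
    prod_comp_eq_of_univ_map_eq hinv F, ← sq, prod_filter]

end InversionSymmetric

section Antitone
variable {n : ℕ} {σ : Fin n → ℝ}

lemma Antitone.val_lt_card_filter_lt (hσ : Antitone σ) {a : ℝ} {i : Fin n} (h : a < σ i) :
    (i : ℕ) < #{j | a < σ j} := by
  have hsub : Iic i ⊆ ({j | a < σ j} : Finset (Fin n)) := fun j hj =>
    mem_filter.2 ⟨mem_univ _, h.trans_le (hσ (mem_Iic.1 hj))⟩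
  simpa [Fin.card_Iic] using card_le_card hsub

lemma Antitone.le_add_card_filter_gt (hσ : Antitone σ) {a : ℝ} {i : Fin n} (h : σ i < a) :
    n ≤ i + #{j | σ j < a} := by
  have hsub : Ici i ⊆ ({j | σ j < a} : Finset (Fin n)) := fun j hj =>
    mem_filter.2 ⟨mem_univ _, (hσ (mem_Ici.1 hj)).trans_lt h⟩
  have := card_le_card hsub
  rw [Fin.card_Ici] at this
  omega

lemma Antitone.prod_ite_lt_eq_prod_filter_one_lt (hσ : Antitone σ) {d : ℕ}
    (hgt : #{i | 1 < σ i} ≤ d) (hlt : #{i | σ i < 1} + d ≤ n) {f : ℝ → ℝ} (hf1 : f 1 = 1) :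
    ∏ i : Fin n, (if (i : ℕ) < d then f (σ i) else 1) = ∏ i with 1 < σ i, f (σ i) := by
  rw [prod_filter]
  refine prod_congr rfl fun i _ => ?_
  by_cases h1 : 1 < σ i
  · rw [if_pos ((hσ.val_lt_card_filter_lt h1).trans_le hgt), if_pos h1]
  by_cases hi : (i : ℕ) < d
  · have : σ i = 1 := le_antisymm (not_lt.1 h1) (not_lt.1 fun h => by
      have := hσ.le_add_card_filter_gt h; omega)
    simp [hi, this, hf1]
  · simp [hi, h1]

lemma Antitone.sq_prod_ite_lt_eq_prod (hσ : Antitone σ)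
    (hinv : univ.val.map (fun i => (σ i)⁻¹) = univ.val.map σ) (hpos : ∀ i, 0 < σ i) {d : ℕ}
    (hcard : #{i | σ i ≠ 1} ≤ d + d) (hd : d + d ≤ n) {f : ℝ → ℝ} (hf : ∀ x, f x⁻¹ = f x)
    (hf1 : f 1 = 1) :
    (∏ i : Fin n, if (i : ℕ) < d then f (σ i) else 1) ^ 2 = ∏ i, f (σ i) := by
  have hsplit : #{i | σ i ≠ 1} = #{i | σ i < 1} + #{i | 1 < σ i} := by
    rw [← card_union_of_disjoint (disjoint_filter.2 fun i _ h h' => h.not_gt h'), ← filter_or]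
    simp only [ne_iff_lt_or_gt]
  have hbal := card_filter_lt_one_eq hinv hpos
  rw [hσ.prod_ite_lt_eq_prod_filter_one_lt (by omega) (by omega) hf1,
    prod_eq_sq_prod_filter_one_lt hinv hpos hf hf1]

end Antitone

namespace Matrix.IsHermitian
variable {n 𝕜 : Type*} [RCLike 𝕜] [Fintype n] [DecidableEq n] {A : Matrix n n 𝕜}

lemma det_cfc (hA : A.IsHermitian) (f : ℝ → ℝ) :
    (cfc f A).det = ∏ i, (f (hA.eigenvalues i) : 𝕜) := by
  rw [cfc_eq hA, IsHermitian.cfc, Unitary.conjStarAlgAut_apply, det_mul, det_mul, mul_right_comm,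
    ← det_mul]
  simp

lemma rank_cfc (hA : A.IsHermitian) (f : ℝ → ℝ) :
    (cfc f A).rank = Fintype.card {i // f (hA.eigenvalues i) ≠ 0} := by
  rw [cfc_eq hA, IsHermitian.cfc, Unitary.conjStarAlgAut_apply, ← Unitary.coe_star]
  simp [-isUnit_iff_ne_zero, -Unitary.coe_star, rank_diagonal]

lemma roots_charpoly_cfc (hA : A.IsHermitian) (f : ℝ → ℝ) :
    (cfc f A).charpoly.roots = univ.val.map (fun i => (f (hA.eigenvalues i) : 𝕜)) := by
  rw [hA.charpoly_cfc_eq, Polynomial.roots_prod]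
  · simp
  · simp [Finset.prod_ne_zero_iff, Polynomial.X_sub_C_ne_zero]

lemma map_inv_eigenvalues (hA : A.IsHermitian) (hA₀ : IsUnit A)
    (h : A⁻¹.charpoly = A.charpoly) :
    univ.val.map (fun i => (hA.eigenvalues i)⁻¹) = univ.val.map hA.eigenvalues := by
  have hinv : cfc (·⁻¹ : ℝ → ℝ) A = A⁻¹ := by
    rw [cfc_ringInverse_id (R := ℝ) (ha_unit := hA₀), nonsing_inv_eq_ringInverse]
  have := congrArg Polynomial.roots h
  rw [← hinv, hA.roots_charpoly_cfc, hA.roots_charpoly_eq_eigenvalues, ← Multiset.map_map] at this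
  apply Multiset.map_injective (RCLike.ofReal_injective (K := 𝕜))
  simpa [Multiset.map_map, Function.comp_def] using this

end Matrix.IsHermitian

section Indefinite
variable {ι R : Type*} [Fintype ι] [DecidableEq ι] [CommRing R] [StarRing R] {G T : Matrix ι ι R}

lemma mul_conjTranspose_mul_mul_eq_one (hG : G * G = 1) (hT : Tᴴ * G * T = G) :
    G * Tᴴ * G * T = 1 := by
  rw [mul_assoc (G * Tᴴ), mul_assoc G, ← mul_assoc Tᴴ, hT, hG]

lemma mul_mul_conjTranspose_eq (hG : G * G = 1) (hT : Tᴴ * G * T = G) : T * G * Tᴴ = G := by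
  have hright : T * (G * Tᴴ * G) = 1 := mul_eq_one_comm.mp (mul_conjTranspose_mul_mul_eq_one hG hT)
  calc T * G * Tᴴ = T * (G * Tᴴ * G) * G := by simp only [mul_assoc, hG, mul_one]
    _ = G := by rw [hright, one_mul]

lemma inv_conjTranspose_mul_self_eq (hG : G * G = 1) (hT : Tᴴ * G * T = G) :
    (Tᴴ * T)⁻¹ = G * (Tᴴ * T) * G := by
  refine inv_eq_left_inv ?_
  calc G * (Tᴴ * T) * G * (Tᴴ * T) = G * Tᴴ * (T * G * Tᴴ) * T := by simp only [mul_assoc]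
    _ = 1 := by rw [mul_mul_conjTranspose_eq hG hT, mul_conjTranspose_mul_mul_eq_one hG hT]

lemma one_add_conjTranspose_mul_self_eq (hG : G * G = 1) (hT : Tᴴ * G * T = G) :
    1 + Tᴴ * T = Tᴴ * (T + G * T * G) := by
  rw [mul_add, ← mul_assoc, ← mul_assoc, hT, hG, add_comm]

lemma conjTranspose_mul_self_sub_one_eq (hT : Tᴴ * G * T = G) :
    Tᴴ * T - 1 = Tᴴ * (1 - G) * T - (1 - G) := by
  rw [mul_sub, sub_mul, mul_one, hT]
  abel

lemma isUnit_det_of_conjTranspose_mul_mul_eq (hG : G * G = 1) (hT : Tᴴ * G * T = G) :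
    IsUnit T.det :=
  isUnit_det_of_left_inverse (mul_conjTranspose_mul_mul_eq_one hG hT)

end Indefinite

lemma Matrix.rank_sub_le {m n K : Type*} [Fintype m] [Fintype n] [Field K] (A B : Matrix m n K) :
    (A - B).rank ≤ A.rank + B.rank := by
  rw [rank, rank, rank]
  refine (Submodule.finrank_mono ?_).trans (Submodule.finrank_add_le_finrank_add_finrank _ _)
  rintro _ ⟨v, rfl⟩
  rw [mulVecLin_apply, sub_mulVec]
  exact Submodule.sub_mem_sup ⟨v, rfl⟩ ⟨v, rfl⟩

lemma submatrix_conjTranspose_mul_mul_eq {ι κ R : Type*} [Fintype ι] [Fintype κ] [CommRing R]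
    [StarRing R] {G T : Matrix ι ι R} (e : κ ≃ ι) (hT : Tᴴ * G * T = G) :
    (T.submatrix e e)ᴴ * G.submatrix e e * T.submatrix e e = G.submatrix e e := by
  rw [conjTranspose_submatrix, submatrix_mul_equiv, submatrix_mul_equiv, hT]

section SingularValues
variable {n : ℕ} (M : Matrix (Fin n) (Fin n) ℂ)

lemma sv_antitone : Antitone (sv M) := fun _ _ hij => Real.sqrt_le_sqrt <|
  Tuple.monotone_sort (isHermitian_conjTranspose_mul_self M).eigenvalues (Fin.rev_le_rev.2 hij)

lemma univ_map_sv : univ.val.map (sv M) =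
    univ.val.map fun i => √((isHermitian_conjTranspose_mul_self M).eigenvalues i) := by
  set μ := (isHermitian_conjTranspose_mul_self M).eigenvalues
  change univ.val.map ((fun i => √(μ i)) ∘ (Fin.revPerm.trans (Tuple.sort μ))) = _
  rw [← Multiset.map_map, Multiset.map_univ_val_equiv]

lemma prod_sv : ∏ i, sv M i = ‖M.det‖ := by
  have hH := isHermitian_conjTranspose_mul_self M
  have hdet : ‖M.det‖ ^ 2 = ∏ i, hH.eigenvalues i := by
    have h := hH.det_eq_prod_eigenvalues
    rw [det_mul, det_conjTranspose, Complex.star_def, Complex.conj_mul'] at h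
    apply RCLike.ofReal_injective (K := ℂ)
    rw [RCLike.ofReal_prod, RCLike.ofReal_pow, ← h]
    rfl
  calc ∏ i, sv M i = ∏ i, √(hH.eigenvalues i) := prod_comp_eq_of_univ_map_eq (univ_map_sv M) id
    _ = ‖M.det‖ := by
      rw [← Real.sqrt_prod _ fun i _ => eigenvalues_conjTranspose_mul_self_nonneg M i, ← hdet,
        Real.sqrt_sq (norm_nonneg _)]

lemma sv_pos (hM : IsUnit M.det) (i : Fin n) : 0 < sv M i := by
  refine (Real.sqrt_nonneg _).lt_of_ne fun h => hM.ne_zero ?_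
  rw [← norm_eq_zero, ← prod_sv, prod_eq_zero (mem_univ i) h.symm]

lemma prod_one_add_sq_sv : ∏ i, (1 + sv M i ^ 2) = ‖(1 + Mᴴ * M).det‖ := by
  have hH := isHermitian_conjTranspose_mul_self M
  have hcfc : cfc (fun x : ℝ => 1 + x) (Mᴴ * M) = 1 + Mᴴ * M := by
    rw [cfc_const_add .., cfc_id' .., map_one]
  rw [← hcfc, hH.det_cfc, norm_prod, prod_comp_eq_of_univ_map_eq (univ_map_sv M) fun x => 1 + x ^ 2]
  refine prod_congr rfl fun i _ => ?_
  have hμ := eigenvalues_conjTranspose_mul_self_nonneg M i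
  rw [Real.sq_sqrt hμ, RCLike.norm_ofReal, abs_of_nonneg (by linarith)]

lemma card_sv_ne_one : #{i | sv M i ≠ 1} = (Mᴴ * M - 1).rank := by
  have hH := isHermitian_conjTranspose_mul_self M
  have hcfc : cfc (fun x : ℝ => x - 1) (Mᴴ * M) = Mᴴ * M - 1 := by
    rw [cfc_sub .., cfc_id' .., cfc_const_one ..]
  rw [← hcfc, hH.rank_cfc, Fintype.card_subtype]
  refine (card_filter_comp_eq_of_univ_map_eq (univ_map_sv M) (· ≠ 1)).trans (congrArg _ ?_)
  refine filter_congr fun i _ => ?_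
  rw [Ne, Real.sqrt_eq_one, sub_ne_zero]

lemma univ_map_inv_sv (hM : IsUnit M.det) (h : (Mᴴ * M)⁻¹.charpoly = (Mᴴ * M).charpoly) :
    univ.val.map (fun i => (sv M i)⁻¹) = univ.val.map (sv M) := by
  have hH := isHermitian_conjTranspose_mul_self M
  have hunit : IsUnit (Mᴴ * M) := by
    rw [isUnit_iff_isUnit_det, det_mul, det_conjTranspose]
    exact hM.star.mul hM
  calc univ.val.map (fun i => (sv M i)⁻¹) = (univ.val.map (sv M)).map (·⁻¹) := by
        rw [Multiset.map_map]; rfl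
    _ = (univ.val.map fun i => (hH.eigenvalues i)⁻¹).map Real.sqrt := by
        simp only [univ_map_sv, Multiset.map_map, Function.comp_def, Real.sqrt_inv]
    _ = univ.val.map (sv M) := by
        rw [hH.map_inv_eigenvalues hunit h, Multiset.map_map, univ_map_sv]; rfl

end SingularValues

section PseudoUnitary
variable {n : ℕ} {G S : Matrix (Fin n) (Fin n) ℂ}

lemma prod_sv_add_inv_eq_norm_det (hG : G * G = 1) (hS : Sᴴ * G * S = G) :
    ∏ i, (sv S i + (sv S i)⁻¹) = ‖(S + G * S * G).det‖ := by
  have hdet := isUnit_det_of_conjTranspose_mul_mul_eq hG hS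
  have hprod : ∏ i, sv S i ≠ 0 := by
    rw [prod_sv]
    exact norm_ne_zero_iff.2 hdet.ne_zero
  refine mul_right_cancel₀ hprod ?_
  calc (∏ i, (sv S i + (sv S i)⁻¹)) * ∏ i, sv S i = ∏ i, (1 + sv S i ^ 2) := by
        rw [← prod_mul_distrib]
        refine prod_congr rfl fun i _ => ?_
        have := (sv_pos S hdet i).ne'
        field_simp
        ring
    _ = ‖(S + G * S * G).det‖ * ∏ i, sv S i := by
        rw [prod_one_add_sq_sv, one_add_conjTranspose_mul_self_eq hG hS, det_mul, norm_mul,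
          det_conjTranspose, norm_star, prod_sv, mul_comm]

lemma card_sv_ne_one_le (hS : Sᴴ * G * S = G) : #{i | sv S i ≠ 1} ≤ 2 * (1 - G).rank := by
  rw [card_sv_ne_one, conjTranspose_mul_self_sub_one_eq hS, two_mul]
  refine (rank_sub_le _ _).trans (Nat.add_le_add_right ?_ _)
  exact (rank_mul_le_left _ _).trans (rank_mul_le_right _ _)

lemma univ_map_inv_sv_of_conjTranspose_mul_mul_eq (hG : G * G = 1) (hS : Sᴴ * G * S = G) :
    univ.val.map (fun i => (sv S i)⁻¹) = univ.val.map (sv S) :=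
  univ_map_inv_sv S (isUnit_det_of_conjTranspose_mul_mul_eq hG hS) <| by
    rw [inv_conjTranspose_mul_self_eq hG hS, charpoly_mul_comm, ← mul_assoc, hG, one_mul]

lemma sq_prod_ite_lt_sv_eq_prod (hG : G * G = 1) (hS : Sᴴ * G * S = G) {d : ℕ}
    (hrank : (1 - G).rank ≤ d) (hd : d + d ≤ n) {f : ℝ → ℝ} (hf : ∀ x, f x⁻¹ = f x) (hf1 : f 1 = 1) :
    (∏ i : Fin n, if (i : ℕ) < d then f (sv S i) else 1) ^ 2 = ∏ i, f (sv S i) :=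
  (sv_antitone S).sq_prod_ite_lt_eq_prod (univ_map_inv_sv_of_conjTranspose_mul_mul_eq hG hS)
    (sv_pos S (isUnit_det_of_conjTranspose_mul_mul_eq hG hS))
    (by have := card_sv_ne_one_le hS; omega) hd hf hf1

end PseudoUnitary

section Blocks
variable {c d : ℕ}

lemma Gcd_mul_self : Gcd c d * Gcd c d = 1 := by
  simp [Gcd, fromBlocks_multiply, fromBlocks_one]

lemma submatrix_Gcd_mul_self {κ : Type*} [Fintype κ] [DecidableEq κ] (e : κ ≃ Fin c ⊕ Fin d) :
    (Gcd c d).submatrix e e * (Gcd c d).submatrix e e = 1 := by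
  rw [submatrix_mul_equiv, Gcd_mul_self, submatrix_one_equiv]

lemma rank_one_sub_Gcd_le : (1 - Gcd c d).rank ≤ d := by
  have : 1 - Gcd c d = fromRows (0 : Matrix (Fin c) (Fin d) ℂ) (2 : Matrix (Fin d) (Fin d) ℂ) *
      fromCols (0 : Matrix (Fin d) (Fin c) ℂ) 1 := by
    rw [fromRows_mul_fromCols]
    simp [Gcd, ← fromBlocks_one, sub_eq_add_neg, fromBlocks_neg, fromBlocks_add, one_add_one_eq_two]
  rw [this]
  exact (rank_mul_le_right _ _).trans ((rank_le_card_height _).trans_eq (Fintype.card_fin d))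

variable {A : Matrix (Fin c) (Fin c) ℂ} {B : Matrix (Fin c) (Fin d) ℂ}
  {C : Matrix (Fin d) (Fin c) ℂ} {D : Matrix (Fin d) (Fin d) ℂ}

lemma det_add_Gcd_mul_fromBlocks_mul_Gcd :
    (fromBlocks A B C D + Gcd c d * fromBlocks A B C D * Gcd c d).det
      = 2 ^ (c + d) * A.det * D.det := by
  have : fromBlocks A B C D + Gcd c d * fromBlocks A B C D * Gcd c d
      = fromBlocks ((2 : ℂ) • A) 0 0 ((2 : ℂ) • D) := by
    simp [Gcd, fromBlocks_multiply, fromBlocks_add, two_smul]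
  rw [this, det_fromBlocks_zero₂₁, det_smul, det_smul, Fintype.card_fin, Fintype.card_fin, pow_add]
  ring

lemma norm_det_eq_of_fromBlocks_mem_pseudoU (hT : fromBlocks A B C D ∈ pseudoU c d) :
    ‖A.det‖ = ‖D.det‖ := by
  have hT' := mul_mul_conjTranspose_eq Gcd_mul_self hT
  have h₁ := congrArg toBlocks₁₁ (hT : _ = Gcd c d)
  have h₂ := congrArg toBlocks₂₂ hT'
  simp only [fromBlocks_conjTranspose, Gcd, fromBlocks_multiply, mul_one, Matrix.mul_zero, add_zero,
    Matrix.mul_neg, Matrix.mul_one, zero_add, mul_neg, Matrix.neg_mul, neg_mul,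
    toBlocks_fromBlocks₁₁, toBlocks_fromBlocks₂₂] at h₁ h₂
  rw [← sub_eq_add_neg, sub_eq_iff_eq_add] at h₁ h₂
  rw [eq_neg_add_iff_add_eq] at h₂
  have hdet : (Aᴴ * A).det = (D * Dᴴ).det := by
    rw [h₁, ← h₂, det_one_add_mul_comm]
  rw [det_mul, det_mul, det_conjTranspose, det_conjTranspose] at hdet
  have := congrArg norm hdet
  simp only [norm_mul, norm_star] at this
  exact (mul_self_inj (norm_nonneg _) (norm_nonneg _)).1 this

end Blocks

section PseudoUnitaryGroup
variable {c d : ℕ} {T : Matrix (Fin c ⊕ Fin d) (Fin c ⊕ Fin d) ℂ}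

lemma svS_pos (hT : T ∈ pseudoU c d) (i : Fin (c + d)) : 0 < svS T i :=
  sv_pos _ (isUnit_det_of_conjTranspose_mul_mul_eq (submatrix_Gcd_mul_self _)
    (submatrix_conjTranspose_mul_mul_eq _ hT)) i

lemma exp_NS (hpos : ∀ i, 0 < svS T i) (r : ℕ) :
    Real.exp (NS r T) =
      ∏ i : Fin (c + d), if (i : ℕ) < r then (svS T i + (svS T i)⁻¹) / 2 else 1 := by
  rw [NS, Real.exp_sum]
  refine prod_congr rfl fun i _ => ?_
  split_ifs
  · exact Real.exp_log (by have := hpos i; positivity)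
  · exact Real.exp_zero

lemma sq_prod_ite_lt_svS_eq_prod (hT : T ∈ pseudoU c d) (hcd : d ≤ c) {f : ℝ → ℝ} (hf : ∀ x, f x⁻¹ = f x) (hf1 : f 1 = 1) :
    (∏ i : Fin (c + d), if (i : ℕ) < d then f (svS T i) else 1) ^ 2 = ∏ i, f (svS T i) := by
  refine sq_prod_ite_lt_sv_eq_prod (submatrix_Gcd_mul_self _)
    (submatrix_conjTranspose_mul_mul_eq _ hT) ?_ (by omega) hf hf1
  rw [← submatrix_one_equiv finSumFinEquiv.symm, ← Pi.sub_apply, ← Pi.sub_apply, ← submatrix_sub,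
    rank_submatrix]
  exact rank_one_sub_Gcd_le

lemma prod_svS_add_inv_div_two_eq_norm_det_sq {A : Matrix (Fin c) (Fin c) ℂ}
    {B : Matrix (Fin c) (Fin d) ℂ} {C : Matrix (Fin d) (Fin c) ℂ} {D : Matrix (Fin d) (Fin d) ℂ}
    (hT : fromBlocks A B C D ∈ pseudoU c d) :
    ∏ i, (svS (fromBlocks A B C D) i + (svS (fromBlocks A B C D) i)⁻¹) / 2 = ‖D.det‖ ^ 2 := by
  set T := fromBlocks A B C D
  have hsub : ∀ e : Fin (c + d) ≃ Fin c ⊕ Fin d, T.submatrix e e +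
      (Gcd c d).submatrix e e * T.submatrix e e * (Gcd c d).submatrix e e =
        (T + Gcd c d * T * Gcd c d).submatrix e e := fun e => by
    simp only [submatrix_mul_equiv]
    rfl
  rw [prod_div_distrib, prod_const, card_univ, Fintype.card_fin, svS,
    prod_sv_add_inv_eq_norm_det (submatrix_Gcd_mul_self _)
      (submatrix_conjTranspose_mul_mul_eq _ hT),
    hsub, det_submatrix_equiv_self, det_add_Gcd_mul_fromBlocks_mul_Gcd, norm_mul, norm_mul, norm_pow, Complex.norm_two,
    norm_det_eq_of_fromBlocks_mem_pseudoU hT]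
  field_simp

end PseudoUnitaryGroup

/-- For `T = [[A,B],[C,D]] ∈ U(c,d)` with `c ≥ d`, one has `|det D| = exp(N_d(T))`. -/
theorem stmt6 (c d : ℕ) (hcd : d ≤ c) (A : Matrix (Fin c) (Fin c) ℂ)
    (B : Matrix (Fin c) (Fin d) ℂ) (C : Matrix (Fin d) (Fin c) ℂ) (D : Matrix (Fin d) (Fin d) ℂ)
    (hT : Matrix.fromBlocks A B C D ∈ pseudoU c d) :
    ‖D.det‖ = Real.exp (NS d (Matrix.fromBlocks A B C D)) := by
  have hsq : Real.exp (NS d (fromBlocks A B C D)) ^ 2 = ‖D.det‖ ^ 2 := by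
    rw [exp_NS (svS_pos hT)]
    exact (sq_prod_ite_lt_svS_eq_prod hT hcd (f := fun x => (x + x⁻¹) / 2)
      (fun x => by rw [inv_inv, add_comm]) (by norm_num)).trans
      (prod_svS_add_inv_div_two_eq_norm_det_sq hT)
  exact (pow_left_inj₀ (norm_nonneg _) (Real.exp_pos _).le two_ne_zero).1 hsq.symm

end
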